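/- Necessary condition on a beneficial ambiguous experiment: If an obedient ambiguous experiment (σ, μ) benefits the sender, i.e., U_s(σ, μ, τ*) > u_s^BP, then there exist θ, θ' in the support of μ such that σ_θ and σ_{θ'} are Pareto-ranked with u_s(σ_θ, τ*) > u_s^BP ≥ u_s(σ_{θ'}, τ*). -/

import Mathlib

open Finset

/-- A stochastic kernel from `X` to `Y`: each row `k x` is a probability vector on `Y`.
An experiment is a kernel from states `Ω` to messages; a receiver strategy is a kernel
from messages to actions `A`. -/
def IsKernel {X Y : Type*} [Fintype Y] (k : X → Y → ℝ) : Prop :=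
  (∀ x y, 0 ≤ k x y) ∧ ∀ x, ∑ y, k x y = 1

/-- A probability vector on a finite type. -/
def IsProb {Θ : Type*} [Fintype Θ] (μ : Θ → ℝ) : Prop :=
  (∀ θ, 0 ≤ μ θ) ∧ ∑ θ, μ θ = 1

/-- The obedient strategy `τ*`: take the recommended action with probability one. -/
noncomputable def tauStar {A : Type*} [DecidableEq A] : A → A → ℝ :=
  fun m a => if a = m then (1 : ℝ) else 0

/-- Expected payoff `u_i(σ, τ) = ∑_{ω,m,a} p(ω) σ(m|ω) τ(a|m) u_i(a,ω)`. -/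
noncomputable def expPayoff {Ω M A : Type*} [Fintype Ω] [Fintype M] [Fintype A]
    (p : Ω → ℝ) (u : A → Ω → ℝ) (σ : Ω → M → ℝ) (τ : M → A → ℝ) : ℝ :=
  ∑ ω, ∑ m, ∑ a, p ω * σ ω m * τ m a * u a ω

/-- Obedience of a single (unambiguous) canonical experiment: `τ*` is a best reply. -/
def Obedient {Ω A : Type*} [Fintype Ω] [Fintype A] [DecidableEq A]
    (p : Ω → ℝ) (ur : A → Ω → ℝ) (σ : Ω → A → ℝ) : Prop :=
  ∀ τ : A → A → ℝ, IsKernel τ → expPayoff p ur σ τ ≤ expPayoff p ur σ tauStar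

/-- Obedience of an ambiguous experiment `(σ, μ)` for a smooth-ambiguity receiver with
index `φr`:  `τ*` maximizes `τ ↦ U_r(σ, μ, τ) = φr⁻¹(∑_θ μ_θ φr(u_r(σ_θ, τ)))`; since `φr`
is strictly increasing this is equivalent to `τ*` maximizing `τ ↦ ∑_θ μ_θ φr(u_r(σ_θ, τ))`. -/
def AmbObedient {Ω A Θ : Type*} [Fintype Ω] [Fintype A] [DecidableEq A] [Fintype Θ]
    (φr : ℝ → ℝ) (p : Ω → ℝ) (ur : A → Ω → ℝ) (σ : Θ → Ω → A → ℝ) (μ : Θ → ℝ) : Prop :=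
  ∀ τ : A → A → ℝ, IsKernel τ →
    ∑ θ, μ θ * φr (expPayoff p ur (σ θ) τ) ≤ ∑ θ, μ θ * φr (expPayoff p ur (σ θ) tauStar)

/-- A smooth ambiguity index: strictly increasing, concave, differentiable. -/
def SmoothIndex (φ : ℝ → ℝ) : Prop :=
  StrictMono φ ∧ ConcaveOn ℝ Set.univ φ ∧ Differentiable ℝ φ

/-- Two experiments are (strictly) Pareto ranked: under obedience, sender and receiver
strictly rank them the same way. -/
def ParetoRanked {Ω A : Type*} [Fintype Ω] [Fintype A] [DecidableEq A]
    (p : Ω → ℝ) (us ur : A → Ω → ℝ) (σ σ' : Ω → A → ℝ) : Prop :=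
  (expPayoff p us σ' tauStar < expPayoff p us σ tauStar ∧
      expPayoff p ur σ' tauStar < expPayoff p ur σ tauStar) ∨
  (expPayoff p us σ tauStar < expPayoff p us σ' tauStar ∧
      expPayoff p ur σ tauStar < expPayoff p ur σ' tauStar)

/-- Two experiments are weakly Pareto ranked. -/
def WeaklyParetoRanked {Ω A : Type*} [Fintype Ω] [Fintype A] [DecidableEq A]
    (p : Ω → ℝ) (us ur : A → Ω → ℝ) (σ σ' : Ω → A → ℝ) : Prop :=
  (expPayoff p us σ' tauStar ≤ expPayoff p us σ tauStar ∧
      expPayoff p ur σ' tauStar ≤ expPayoff p ur σ tauStar) ∨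
  (expPayoff p us σ tauStar ≤ expPayoff p us σ' tauStar ∧
      expPayoff p ur σ tauStar ≤ expPayoff p ur σ' tauStar)

/-- Pointwise convex combination of two experiments. -/
noncomputable def mixExp {Ω A : Type*} (lam : ℝ) (σ1 σ2 : Ω → A → ℝ) : Ω → A → ℝ :=
  fun ω a => lam * σ1 ω a + (1 - lam) * σ2 ω a

/-- `(σbar, σlo, lam)` is a Pareto-ranked splitting of the experiment `σ`. -/
def ParetoRankedSplitting {Ω A : Type*} [Fintype Ω] [Fintype A] [DecidableEq A]
    (p : Ω → ℝ) (us ur : A → Ω → ℝ) (σbar σlo : Ω → A → ℝ) (lam : ℝ) (σ : Ω → A → ℝ) : Prop :=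
  IsKernel σbar ∧ IsKernel σlo ∧ lam ∈ Set.Ioo (0 : ℝ) 1 ∧
    mixExp lam σbar σlo = σ ∧ ParetoRanked p us ur σbar σlo

/-- The `((σbar, σlo), lam)`-probability premium of a player with utility `u` and index `φ`. -/
noncomputable def probPremium {Ω A : Type*} [Fintype Ω] [Fintype A] [DecidableEq A]
    (p : Ω → ℝ) (u : A → Ω → ℝ) (φ : ℝ → ℝ) (σbar σlo : Ω → A → ℝ) (lam : ℝ) : ℝ :=
  (φ (expPayoff p u (mixExp lam σbar σlo) tauStar) -
      lam * φ (expPayoff p u σbar tauStar) - (1 - lam) * φ (expPayoff p u σlo tauStar)) /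
    (φ (expPayoff p u σbar tauStar) - φ (expPayoff p u σlo tauStar))

/-- The set of `φs`-transformed sender values attainable by obedient ambiguous experiments;
the value of the sender's problem `(P)` equals `u` iff `φs u` is the least upper bound of
this set (since `φs` is continuous and strictly increasing). -/
def senderValues {Ω A : Type*} [Fintype Ω] [Fintype A] [DecidableEq A]
    (φs φr : ℝ → ℝ) (p : Ω → ℝ) (us ur : A → Ω → ℝ) : Set ℝ :=
  {x | ∃ (n : ℕ) (σ : Fin n → Ω → A → ℝ) (μ : Fin n → ℝ),
    (∀ j, IsKernel (σ j)) ∧ IsProb μ ∧ AmbObedient φr p ur σ μ ∧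
    x = ∑ j, μ j * φs (expPayoff p us (σ j) tauStar)}

/-- The set of feasible values of the auxiliary program `(Φ*(u))`: sums
`∑_θ λ_θ Φ_u(σ_θ)` over splittings `(λ_θ, σ_θ)` of obedient experiments, where
`Φ_u(σ) = (φs(u_s(σ,τ*)) − φs(u)) / φr'(u_r(σ,τ*))`. -/
def phiProgram {Ω A : Type*} [Fintype Ω] [Fintype A] [DecidableEq A]
    (φs φr : ℝ → ℝ) (p : Ω → ℝ) (us ur : A → Ω → ℝ) (u : ℝ) : Set ℝ :=
  {x | ∃ (n : ℕ) (σ : Fin n → Ω → A → ℝ) (lam : Fin n → ℝ),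
    (∀ j, IsKernel (σ j)) ∧ IsProb lam ∧
    Obedient p ur (fun ω a => ∑ j, lam j * σ j ω a) ∧
    x = ∑ j, lam j * ((φs (expPayoff p us (σ j) tauStar) - φs u) /
      deriv φr (expPayoff p ur (σ j) tauStar))}

/-!
The receiver's first-order condition for the obedience of `(σ, μ)` says that `τ*` is a best reply
to the single experiment mixing the `σ_θ` with weights proportional to `μ_θ φr'(u_r(σ_θ, τ*))`.
That experiment is therefore obedient, so its sender value is at most `u_s^BP`: the
`φr'`-tilted average of `u_s(σ_θ, τ*) - u_s^BP` is nonpositive, while by Jensen its `μ`-average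
is positive. Take the supported `θ` above `u_s^BP` with the largest receiver payoff. If no
supported pair straddling `u_s^BP` were Pareto-ranked, every supported `θ'` below `u_s^BP` would
give the receiver at least as much; as `φr'` is decreasing, the tilt, compared with the constant
factor `φr'(u_r(σ_θ, τ*))`, then weighs gains up and losses down, contradicting the two signs.
-/

def mixture {Θ X Y : Type*} [Fintype Θ] (c : Θ → ℝ) (k : Θ → X → Y → ℝ) : X → Y → ℝ :=
  fun x y => ∑ θ, c θ * k θ x y

section Payoff

variable {Ω M A : Type*} [Fintype Ω] [Fintype M] [Fintype A]

theorem expPayoff_mixture {Θ : Type*} [Fintype Θ] (p : Ω → ℝ) (u : A → Ω → ℝ) (c : Θ → ℝ)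
    (σ : Θ → Ω → M → ℝ) (τ : M → A → ℝ) :
    expPayoff p u (mixture c σ) τ = ∑ θ, c θ * expPayoff p u (σ θ) τ := by
  simp only [expPayoff, mixture, mul_sum, sum_mul]
  simp_rw [Finset.sum_comm (γ := Θ)]
  exact sum_congr rfl fun _ _ => sum_congr rfl fun _ _ => sum_congr rfl fun _ _ =>
    sum_congr rfl fun _ _ => by ring

theorem expPayoff_strategy_add (p : Ω → ℝ) (u : A → Ω → ℝ) (σ : Ω → M → ℝ)
    (τ₁ τ₂ : M → A → ℝ) (b c : ℝ) :
    expPayoff p u σ (fun m a => b * τ₁ m a + c * τ₂ m a)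
      = b * expPayoff p u σ τ₁ + c * expPayoff p u σ τ₂ := by
  simp only [expPayoff, mul_sum, ← sum_add_distrib]
  exact sum_congr rfl fun ω _ => sum_congr rfl fun m _ => sum_congr rfl fun a _ => by ring

end Payoff

section Kernel

variable {X Y : Type*} [Fintype Y]

theorem IsProb.isKernel_mixture {Θ : Type*} [Fintype Θ] {c : Θ → ℝ} {k : Θ → X → Y → ℝ}
    (hc : IsProb c) (hk : ∀ θ, IsKernel (k θ)) : IsKernel (mixture c k) := by
  refine ⟨fun x y => sum_nonneg fun θ _ => mul_nonneg (hc.1 θ) ((hk θ).1 x y), fun x => ?_⟩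
  simp only [mixture]
  rw [sum_comm]
  simp only [← mul_sum, (hk _).2 x, mul_one, hc.2]

theorem IsKernel.lineMap {k₁ k₂ : X → Y → ℝ} (h₁ : IsKernel k₁) (h₂ : IsKernel k₂) {t : ℝ}
    (ht : t ∈ Set.Icc (0 : ℝ) 1) : IsKernel (fun x y => (1 - t) * k₁ x y + t * k₂ x y) := by
  refine ⟨fun x y => ?_, fun x => ?_⟩
  · exact add_nonneg (mul_nonneg (sub_nonneg.2 ht.2) (h₁.1 x y)) (mul_nonneg ht.1 (h₂.1 x y))
  · rw [sum_add_distrib, ← mul_sum, ← mul_sum, h₁.2 x, h₂.2 x]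
    ring

end Kernel

theorem isKernel_tauStar {A : Type*} [Fintype A] [DecidableEq A] :
    IsKernel (tauStar : A → A → ℝ) :=
  ⟨fun m a => by unfold tauStar; split_ifs <;> norm_num, fun m => by simp [tauStar]⟩

section Prob

variable {Θ : Type*} [Fintype Θ] {μ : Θ → ℝ}

theorem IsProb.exists_pos (hμ : IsProb μ) : ∃ θ, 0 < μ θ := by
  by_contra! h
  have : ∑ θ, μ θ = 0 := sum_eq_zero fun θ _ => le_antisymm (h θ) (hμ.1 θ)
  linarith [hμ.2]

theorem IsProb.sum_mul_sub (hμ : IsProb μ) (f : Θ → ℝ) (b : ℝ) :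
    ∑ θ, μ θ * (f θ - b) = ∑ θ, μ θ * f θ - b := by
  simp only [mul_sub, sum_sub_distrib, ← sum_mul, hμ.2, one_mul]

theorem isProb_div_sum {w : Θ → ℝ} (hw : ∀ θ, 0 ≤ w θ) (hpos : 0 < ∑ θ, w θ) :
    IsProb fun θ => w θ / ∑ θ', w θ' :=
  ⟨fun θ => div_nonneg (hw θ) hpos.le, by rw [← sum_div, div_self hpos.ne']⟩

theorem ConcaveOn.lt_sum_mul_of_map_lt {φ : ℝ → ℝ} (hφ : ConcaveOn ℝ Set.univ φ)
    (hmono : StrictMono φ) (hμ : IsProb μ) {u : Θ → ℝ} {b : ℝ}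
    (h : φ b < ∑ θ, μ θ * φ (u θ)) : b < ∑ θ, μ θ * u θ := by
  have := hφ.le_map_sum (t := univ) (fun θ _ => hμ.1 θ) hμ.2 (fun θ _ => Set.mem_univ (u θ))
  simp only [smul_eq_mul] at this
  exact hmono.lt_iff_lt.mp (h.trans_le this)

end Prob

theorem SmoothIndex.deriv_pos {φ : ℝ → ℝ} (hφ : SmoothIndex φ) (x : ℝ) : 0 < deriv φ x := by
  have hslope : slope φ x (x + 1) ≤ deriv φ x :=
    hφ.2.1.slope_le_deriv (Set.mem_univ x) (Set.mem_univ _) (by linarith) (hφ.2.2 x)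
  have : 0 < slope φ x (x + 1) := by
    rw [slope_def_field, add_sub_cancel_left, div_one, sub_pos]
    exact hφ.1 (lt_add_one x)
  linarith

theorem SmoothIndex.antitone_deriv {φ : ℝ → ℝ} (hφ : SmoothIndex φ) : Antitone (deriv φ) :=
  fun _ _ hab => hφ.2.1.antitoneOn_deriv (fun x _ => hφ.2.2 x) (Set.mem_univ _) (Set.mem_univ _) hab

theorem HasDerivAt.nonpos_of_isMaxOn_Icc {g : ℝ → ℝ} {g' a b : ℝ} (hab : a < b)
    (hg : HasDerivAt g g' a) (hmax : IsMaxOn g (Set.Icc a b) a) : g' ≤ 0 := by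
  have hcone : b - a ∈ posTangentConeAt (Set.Icc a b) a :=
    sub_mem_posTangentConeAt_of_segment_subset (segment_eq_Icc hab.le).subset
  have := hmax.localize.hasFDerivWithinAt_nonpos hg.hasFDerivAt.hasFDerivWithinAt hcone
  rw [ContinuousLinearMap.toSpanSingleton_apply, smul_eq_mul] at this
  exact nonpos_of_mul_nonpos_right this (sub_pos.2 hab)

theorem exists_straddling_pair_of_sum_mul_antitone_nonpos {ι : Type*} [Fintype ι]
    {μ u x : ι → ℝ} {d : ℝ → ℝ} {b : ℝ} (hμ : ∀ i, 0 ≤ μ i) (hd : Antitone d)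
    (hd_pos : ∀ t, 0 < d t) (havg : 0 < ∑ i, μ i * (u i - b))
    (htilt : ∑ i, μ i * d (x i) * (u i - b) ≤ 0) :
    ∃ i j, μ i ≠ 0 ∧ μ j ≠ 0 ∧ x j < x i ∧ b < u i ∧ u j ≤ b := by
  classical
  have hH : (univ.filter fun i => μ i ≠ 0 ∧ b < u i).Nonempty := by
    by_contra hH
    refine havg.not_ge (sum_nonpos fun i _ => ?_)
    by_cases hi : μ i = 0
    · simp [hi]
    have hui : u i ≤ b := by
      by_contra! hui
      exact hH ⟨i, mem_filter.2 ⟨mem_univ i, hi, hui⟩⟩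
    exact mul_nonpos_of_nonneg_of_nonpos (hμ i) (sub_nonpos.2 hui)
  obtain ⟨i, hiH, hi_max⟩ := exists_max_image _ x hH
  obtain ⟨-, hμi, hui⟩ := mem_filter.1 hiH
  by_contra! hnone
  have hcmp : ∀ j, 0 ≤ μ j * ((d (x j) - d (x i)) * (u j - b)) := by
    intro j
    by_cases hj : μ j = 0
    · simp [hj]
    refine mul_nonneg (hμ j) ?_
    rcases lt_or_ge b (u j) with huj | huj
    · have hxj : x j ≤ x i := hi_max j (mem_filter.2 ⟨mem_univ j, hj, huj⟩)
      exact mul_nonneg (sub_nonneg.2 (hd hxj)) (sub_nonneg.2 huj.le)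
    · have hxi : x i ≤ x j := by
        by_contra! hx
        exact (hnone i j hμi hj hx hui).not_ge huj
      exact mul_nonneg_of_nonpos_of_nonpos (sub_nonpos.2 (hd hxi)) (sub_nonpos.2 huj)
  have hsplit : ∑ j, μ j * d (x j) * (u j - b)
      = d (x i) * ∑ j, μ j * (u j - b) + ∑ j, μ j * ((d (x j) - d (x i)) * (u j - b)) := by
    rw [mul_sum, ← sum_add_distrib]
    exact sum_congr rfl fun j _ => by ring
  linarith [sum_nonneg fun j (_ : j ∈ univ) => hcmp j, mul_pos (hd_pos (x i)) havg]

section Obedience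

variable {Ω A Θ : Type*} [Fintype Ω] [Fintype A] [DecidableEq A] [Fintype Θ]

theorem AmbObedient.sum_mul_deriv_mul_sub_nonpos {φr : ℝ → ℝ} (hφr : Differentiable ℝ φr)
    {p : Ω → ℝ} {ur : A → Ω → ℝ} {σ : Θ → Ω → A → ℝ} {μ : Θ → ℝ}
    (hobed : AmbObedient φr p ur σ μ) {τ : A → A → ℝ} (hτ : IsKernel τ) :
    ∑ θ, μ θ * deriv φr (expPayoff p ur (σ θ) tauStar) *
      (expPayoff p ur (σ θ) τ - expPayoff p ur (σ θ) tauStar) ≤ 0 := by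
  set x : Θ → ℝ := fun θ => expPayoff p ur (σ θ) tauStar
  set y : Θ → ℝ := fun θ => expPayoff p ur (σ θ) τ
  set g : ℝ → ℝ := fun t => ∑ θ, μ θ * φr (x θ + t * (y θ - x θ))
  have hg : HasDerivAt g (∑ θ, μ θ * deriv φr (x θ) * (y θ - x θ)) 0 := by
    refine HasDerivAt.fun_sum fun θ _ => ?_
    have hline : HasDerivAt (fun t : ℝ => x θ + t * (y θ - x θ)) (y θ - x θ) 0 := by
      simpa using ((hasDerivAt_id (0 : ℝ)).mul_const (y θ - x θ)).const_add (x θ)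
    have hφ : HasDerivAt φr (deriv φr (x θ)) (x θ + 0 * (y θ - x θ)) := by
      simpa using (hφr (x θ)).hasDerivAt
    simpa [mul_assoc] using (hφ.comp 0 hline).const_mul (μ θ)
  refine hg.nonpos_of_isMaxOn_Icc zero_lt_one fun t ht => ?_
  have hpay : ∀ θ, expPayoff p ur (σ θ) (fun m a => (1 - t) * tauStar m a + t * τ m a)
      = x θ + t * (y θ - x θ) := fun θ => by
    rw [expPayoff_strategy_add]
    ring
  have := hobed _ (isKernel_tauStar.lineMap hτ ht)
  simp only [hpay] at this
  simpa [g] using this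

theorem AmbObedient.sum_mul_deriv_mul_sub_nonpos_of_mem_upperBounds {φr : ℝ → ℝ}
    (hφr : SmoothIndex φr) {p : Ω → ℝ} {us ur : A → Ω → ℝ} {σ : Θ → Ω → A → ℝ} {μ : Θ → ℝ}
    (hσ : ∀ θ, IsKernel (σ θ)) (hμ : IsProb μ) (hobed : AmbObedient φr p ur σ μ) {b : ℝ}
    (hb : b ∈ upperBounds {x : ℝ | ∃ σ0 : Ω → A → ℝ,
      IsKernel σ0 ∧ Obedient p ur σ0 ∧ x = expPayoff p us σ0 tauStar}) :
    ∑ θ, μ θ * deriv φr (expPayoff p ur (σ θ) tauStar) *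
      (expPayoff p us (σ θ) tauStar - b) ≤ 0 := by
  set w : Θ → ℝ := fun θ => μ θ * deriv φr (expPayoff p ur (σ θ) tauStar)
  have hw : ∀ θ, 0 ≤ w θ := fun θ => mul_nonneg (hμ.1 θ) (hφr.deriv_pos _).le
  have hW : 0 < ∑ θ, w θ := by
    obtain ⟨θ, hθ⟩ := hμ.exists_pos
    exact (mul_pos hθ (hφr.deriv_pos _)).trans_le (single_le_sum (fun θ _ => hw θ) (mem_univ θ))
  set c : Θ → ℝ := fun θ => w θ / ∑ θ', w θ'
  have hc : IsProb c := isProb_div_sum hw hW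
  have hob : Obedient p ur (mixture c σ) := by
    intro τ hτ
    rw [expPayoff_mixture, expPayoff_mixture, ← sub_nonpos, ← sum_sub_distrib]
    calc ∑ θ, (c θ * expPayoff p ur (σ θ) τ - c θ * expPayoff p ur (σ θ) tauStar)
        = (∑ θ, w θ * (expPayoff p ur (σ θ) τ - expPayoff p ur (σ θ) tauStar)) / ∑ θ, w θ := by
          rw [sum_div]
          exact sum_congr rfl fun θ _ => by ring
      _ ≤ 0 := div_nonpos_of_nonpos_of_nonneg
          (hobed.sum_mul_deriv_mul_sub_nonpos hφr.2.2 hτ) hW.le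
  have hbound := hb ⟨_, hc.isKernel_mixture hσ, hob, rfl⟩
  rw [expPayoff_mixture, ← sub_nonpos, ← hc.sum_mul_sub] at hbound
  calc ∑ θ, w θ * (expPayoff p us (σ θ) tauStar - b)
      = (∑ θ, w θ) * ∑ θ, c θ * (expPayoff p us (σ θ) tauStar - b) := by
        rw [mul_sum]
        exact sum_congr rfl fun θ _ => by simp only [c]; field_simp
    _ ≤ 0 := mul_nonpos_of_nonneg_of_nonpos hW.le hbound

end Obedience

theorem necessary_pareto_ranked_pair_general
    {Ω A Θ : Type*} [Fintype Ω] [Fintype A] [DecidableEq A] [Fintype Θ]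
    (p : Ω → ℝ) (us ur : A → Ω → ℝ)
    (φs φr : ℝ → ℝ) (hφs : SmoothIndex φs) (hφr : SmoothIndex φr)
    (usBP : ℝ)
    (husBP : IsGreatest {x : ℝ | ∃ σ0 : Ω → A → ℝ,
      IsKernel σ0 ∧ Obedient p ur σ0 ∧ x = expPayoff p us σ0 tauStar} usBP)
    (σ : Θ → Ω → A → ℝ) (hσ : ∀ θ, IsKernel (σ θ)) (μ : Θ → ℝ) (hμ : IsProb μ)
    (hobed : AmbObedient φr p ur σ μ)
    (hben : φs usBP < ∑ θ, μ θ * φs (expPayoff p us (σ θ) tauStar)) :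
    ∃ θ θ', μ θ ≠ 0 ∧ μ θ' ≠ 0 ∧ ParetoRanked p us ur (σ θ) (σ θ') ∧
      usBP < expPayoff p us (σ θ) tauStar ∧
      expPayoff p us (σ θ') tauStar ≤ usBP := by
  have havg : 0 < ∑ θ, μ θ * (expPayoff p us (σ θ) tauStar - usBP) := by
    rw [hμ.sum_mul_sub, sub_pos]
    exact hφs.2.1.lt_sum_mul_of_map_lt hφs.1 hμ hben
  obtain ⟨θ, θ', hθ, hθ', hur, hus, hus'⟩ :=
    exists_straddling_pair_of_sum_mul_antitone_nonpos hμ.1 hφr.antitone_deriv hφr.deriv_pos havg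
      (hobed.sum_mul_deriv_mul_sub_nonpos_of_mem_upperBounds hφr hσ hμ husBP.2)
  exact ⟨θ, θ', hθ, hθ', Or.inl ⟨hus'.trans_lt hus, hur⟩, hus, hus'⟩

/-- Theorem 2: if the obedient ambiguous experiment `(σ, μ)` benefits the
sender (`U_s(σ, μ, τ*) > u_s^BP`, stated via the strictly increasing `φs`), then there are
`θ, θ'` in the support of `μ` with `σ_θ, σ_{θ'}` Pareto-ranked and
`u_s(σ_θ, τ*) > u_s^BP ≥ u_s(σ_{θ'}, τ*)`. -/
theorem necessary_pareto_ranked_pair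
    {Ω A Θ : Type*} [Fintype Ω] [Fintype A] [DecidableEq A] [Fintype Θ]
    (p : Ω → ℝ) (hp : IsProb p) (us ur : A → Ω → ℝ)
    (φs φr : ℝ → ℝ) (hφs : SmoothIndex φs) (hφr : SmoothIndex φr)
    (usBP : ℝ)
    (husBP : IsGreatest {x : ℝ | ∃ σ0 : Ω → A → ℝ,
      IsKernel σ0 ∧ Obedient p ur σ0 ∧ x = expPayoff p us σ0 tauStar} usBP)
    (σ : Θ → Ω → A → ℝ) (hσ : ∀ θ, IsKernel (σ θ)) (μ : Θ → ℝ) (hμ : IsProb μ)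
    (hobed : AmbObedient φr p ur σ μ)
    (hben : φs usBP < ∑ θ, μ θ * φs (expPayoff p us (σ θ) tauStar)) :
    ∃ θ θ', μ θ ≠ 0 ∧ μ θ' ≠ 0 ∧ ParetoRanked p us ur (σ θ) (σ θ') ∧
      usBP < expPayoff p us (σ θ) tauStar ∧
      expPayoff p us (σ θ') tauStar ≤ usBP :=
  necessary_pareto_ranked_pair_general p us ur φs φr hφs hφr usBP husBP σ hσ μ hμ hobed hben
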